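/- arXiv:math/0407195 — 2 statements merged into one kernel-verified Lean document; each statement's English description precedes it below -/
import Mathlib

section
/- Algorithm II is correct: defining b_j^{(0)} = f_j/(z − t·z_j), A_n = ∏_{i=0}^{n} (z − t·z_i), b_j^{(n)} = b_j^{(n−1)}/(z_j − z_n) for j < n, b_n^{(n)} = b_n^{(0)}/∏_{j=0}^{n−1}(z_n − z_j), and B_n = ∑_{j=0}^{n} b_j^{(n)}, one has A_n·B_n = ∑_{j=0}^{n} f_j ∏_{i=0, i≠j}^{n} (z − t·z_i)/(z_j − z_i) for every n. -/
/-- Correctness of Algorithm II: with `b_j^{(0)} = f_j/(z − t·z_j)`,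
`A_n = ∏_{i=0}^{n} (z − t·z_i)`, `b_j^{(n)} = b_j^{(n−1)}/(z_j − z_n)` for `j < n`,
`b_n^{(n)} = b_n^{(0)}/∏_{j=0}^{n−1}(z_n − z_j)`, and `B_n = ∑_{j=0}^{n} b_j^{(n)}`,
one has `A_n·B_n = ∑_{j=0}^{n} f_j ∏_{i≠j} (z − t·z_i)/(z_j − z_i)` for every `n ≤ N`. -/
theorem stmt5 (N : ℕ) (zs f : ℕ → ℂ) (t w : ℂ)
    (hz : ∀ i ≤ N, ∀ j ≤ N, i ≠ j → zs i ≠ zs j)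
    (hw : ∀ j ≤ N, w ≠ t * zs j)
    (b : ℕ → ℕ → ℂ) (A B : ℕ → ℂ)
    (hb0 : ∀ j ≤ N, b 0 j = f j / (w - t * zs j))
    (hA : ∀ n ≤ N, A n = ∏ i ∈ Finset.range (n + 1), (w - t * zs i))
    (hbrec : ∀ n, 1 ≤ n → n ≤ N → ∀ j < n, b n j = b (n - 1) j / (zs j - zs n))
    (hbdiag : ∀ n, 1 ≤ n → n ≤ N →
      b n n = b 0 n / ∏ j ∈ Finset.range n, (zs n - zs j))
    (hB : ∀ n ≤ N, B n = ∑ j ∈ Finset.range (n + 1), b n j) :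
    ∀ n ≤ N, A n * B n = ∑ j ∈ Finset.range (n + 1), f j *
      ∏ i ∈ (Finset.range (n + 1)).erase j, (w - t * zs i) / (zs j - zs i) := by
  have key : ∀ n ≤ N, ∀ j ≤ n, b n j =
      f j / ((w - t * zs j) * ∏ i ∈ (Finset.range (n + 1)).erase j, (zs j - zs i)) := by
    intro n
    induction n with
    | zero =>
      intro _ j hj
      interval_cases j
      simp [hb0 0 (by omega)]
    | succ m ih =>
      intro hn j hj
      rcases lt_or_eq_of_le hj with hlt | heq
      · have hrec := hbrec (m + 1) (by omega) hn j hlt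
        simp only [Nat.add_sub_cancel] at hrec
        rw [hrec, ih (by omega) j (by omega)]
        have hsplit : (Finset.range (m + 2)).erase j =
            insert (m + 1) ((Finset.range (m + 1)).erase j) := by
          rw [Finset.range_add_one, Finset.erase_insert_of_ne (by omega)]
        rw [hsplit, Finset.prod_insert (by simp)]
        rw [div_div]
        congr 1; ring
      · subst heq
        rw [hbdiag (m + 1) (by omega) hn, hb0 (m + 1) hn]
        have : (Finset.range (m + 2)).erase (m + 1) = Finset.range (m + 1) := by
          rw [Finset.range_add_one, Finset.erase_insert (by simp)]
        rw [this, div_div]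
  intro n hn
  rw [hB n hn, hA n hn, Finset.mul_sum]
  apply Finset.sum_congr rfl
  intro j hj
  rw [Finset.mem_range] at hj
  rw [key n hn j (by omega)]
  rw [← Finset.mul_prod_erase _ _ (Finset.mem_range.mpr hj)]
  rw [Finset.prod_div_distrib]
  set P := ∏ i ∈ (Finset.range (n + 1)).erase j, (w - t * zs i)
  have hQ : (∏ i ∈ (Finset.range (n + 1)).erase j, (zs j - zs i)) ≠ 0 := by
    apply Finset.prod_ne_zero_iff.mpr
    intro i hi
    rw [Finset.mem_erase, Finset.mem_range] at hi
    exact sub_ne_zero_of_ne (hz j (by omega) i (by omega) (Ne.symm hi.1))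
  have hwj : w - t * zs j ≠ 0 := sub_ne_zero_of_ne (hw j (by omega))
  field_simp
end

section
/- Let the exact recurrence c_k^{(n)} = ((z−t·z_{n+k})c_k^{(n−1)} − (z−t·z_k)c_{k+1}^{(n−1)})/(z_k − z_{k+n}) be perturbed multiplicatively: c̃_k^{(n)} = ((1+α)(z−t·z_{n+k})c̃_k^{(n−1)} − (1+β)(z−t·z_k)c̃_{k+1}^{(n−1)})/(z_k − z_{k+n}) with |α|,|β| ≤ η, starting from c̃_k^{(0)} = f_k. If the backward errors at level n−1 satisfy |δ_{k,j}^{(n−1)}| ≤ θ, then the level-n result admits a backward-error representation c̃_k^{(n)} = ∑_{j=k}^{k+n} f_j(1+δ_{k,j}^{(n)}) ∏_{i=k,i≠j}^{k+n} (z−t·z_i)/(z_j−z_i) with |δ_{k,j}^{(n)}| ≤ L·max over the combined factors |(1+α)(1+δ^{(n−1)}) − 1| and |(1+β)(1+δ^{(n−1)}) − 1|, where L = max_{0≤i<j<k≤N} (|z_i−z_j|+|z_j−z_k|)/|z_i−z_k|. In particular |δ_{k,j}^{(n)}| ≤ L·(η + θ + ηθ). -/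
/-!
Write `ℓ_j^S = ∏_{i ∈ S, i ≠ j} (w - t z_i)/(z_j - z_i)`. Multiplying `ℓ_j^{[a,b-1]}` by
`(w - t z_b)/(z_a - z_b)` gives `λ_j ℓ_j^{[a,b]}` with `λ_j = (z_j - z_b)/(z_a - z_b)`, and
multiplying `ℓ_j^{[a+1,b]}` by `-(w - t z_a)/(z_a - z_b)` gives `μ_j ℓ_j^{[a,b]}` with
`μ_j = (z_a - z_j)/(z_a - z_b)`. So one perturbed step produces the coefficient
`f_j (λ_j p_j + μ_j q_j)` in front of `ℓ_j^{[a,b]}`, where `p_j, q_j` are the combined factors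
`(1+α)(1+δ)`. Since `λ_j + μ_j = 1`, the new relative error is `λ_j (p_j - 1) + μ_j (q_j - 1)`,
and `|λ_j| + |μ_j|` is one of the ratios whose maximum is `L` (or `1 ≤ L` at the endpoints).
-/

open Finset

section Basis

variable {ι K : Type*} [DecidableEq ι] [Field K]

/-- At `t = 1` this is the Lagrange basis polynomial of the nodes `z i`, `i ∈ s`, at `w`. -/
def scaledLagrangeBasis (z : ι → K) (t w : K) (s : Finset ι) (j : ι) : K :=
  ∏ i ∈ s.erase j, (w - t * z i) / (z j - z i)

variable {z : ι → K} {t w : K} {s : Finset ι} {j m : ι}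

theorem scaledLagrangeBasis_insert (hjm : j ≠ m) (hm : m ∉ s) :
    scaledLagrangeBasis z t w (insert m s) j =
      (w - t * z m) / (z j - z m) * scaledLagrangeBasis z t w s j := by
  rw [scaledLagrangeBasis, erase_insert_of_ne hjm.symm,
    prod_insert fun h => hm (mem_of_mem_erase h), scaledLagrangeBasis]

theorem mul_sum_scaledLagrangeBasis_insert (hm : m ∉ s) (hz : ∀ j ∈ s, z j ≠ z m)
    (u : ι → K) :
    (w - t * z m) * ∑ j ∈ s, u j * scaledLagrangeBasis z t w s j =
      ∑ j ∈ insert m s, u j * (z j - z m) * scaledLagrangeBasis z t w (insert m s) j := by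
  rw [sum_insert hm, sub_self, mul_zero, zero_mul, zero_add, mul_sum]
  refine sum_congr rfl fun j hj => ?_
  have hjm : z j - z m ≠ 0 := sub_ne_zero.2 (hz j hj)
  rw [scaledLagrangeBasis_insert (ne_of_mem_of_not_mem hj hm) hm]
  field_simp

end Basis

theorem aitken_step {K : Type*} [Field K] {z : ℕ → K} (t w : K) {a b : ℕ} (hab : a < b)
    (hz : Set.InjOn z (Set.Icc a b)) (p q : K) (u v : ℕ → K) :
    (p * (w - t * z b) * ∑ j ∈ Icc a (b - 1), u j * scaledLagrangeBasis z t w (Icc a (b - 1)) j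
        - q * (w - t * z a) *
          ∑ j ∈ Icc (a + 1) b, v j * scaledLagrangeBasis z t w (Icc (a + 1) b) j) /
        (z a - z b) =
      ∑ j ∈ Icc a b, ((z j - z b) / (z a - z b) * (p * u j) +
        (z a - z j) / (z a - z b) * (q * v j)) * scaledLagrangeBasis z t w (Icc a b) j := by
  have hne : ∀ {i j}, i ∈ Icc a b → j ∈ Icc a b → i ≠ j → z i ≠ z j := fun hi hj hij h =>
    hij (hz (by simpa using hi) (by simpa using hj) h)
  have hD : z a - z b ≠ 0 := sub_ne_zero.2 (hne (by simp; omega) (by simp; omega) hab.ne)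
  have hS₁ : insert b (Icc a (b - 1)) = Icc a b := by
    obtain ⟨c, rfl⟩ : ∃ c, b = c + 1 := ⟨b - 1, by omega⟩
    exact insert_Icc_right_eq_Icc_add_one (by omega)
  have hS₂ : insert a (Icc (a + 1) b) = Icc a b := insert_Icc_add_one_left_eq_Icc hab.le
  have hb : b ∉ Icc a (b - 1) := by simp; omega
  have ha : a ∉ Icc (a + 1) b := by simp
  rw [mul_assoc, mul_sum_scaledLagrangeBasis_insert hb fun j hj => hne (by simp at hj ⊢; omega)
      (by simp; omega) (ne_of_mem_of_not_mem hj hb),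
    mul_assoc, mul_sum_scaledLagrangeBasis_insert ha fun j hj => hne (by simp at hj ⊢; omega)
      (by simp; omega) (ne_of_mem_of_not_mem hj ha),
    hS₁, hS₂, mul_sum, mul_sum, ← sum_sub_distrib, sum_div]
  refine sum_congr rfl fun j _ => ?_
  field_simp
  ring

theorem norm_one_add_mul_one_add_sub_one_le {R : Type*} [SeminormedRing R] {x y : R} {η θ : ℝ}
    (hx : ‖x‖ ≤ η) (hy : ‖y‖ ≤ θ) : ‖(1 + x) * (1 + y) - 1‖ ≤ η + θ + η * θ := by
  have hη : 0 ≤ η := (norm_nonneg x).trans hx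
  calc ‖(1 + x) * (1 + y) - 1‖ = ‖x + y + x * y‖ := by noncomm_ring
    _ ≤ ‖x‖ + ‖y‖ + ‖x‖ * ‖y‖ := (norm_add₃_le ..).trans (by gcongr; exact norm_mul_le x y)
    _ ≤ η + θ + η * θ := by gcongr

theorem norm_mul_add_mul_sub_one_le {R : Type*} [SeminormedCommRing R] {l m p q : R} {E L : ℝ}
    (hlm : l + m = 1) (hL : ‖l‖ + ‖m‖ ≤ L) (hE : 0 ≤ E)
    (hp : l ≠ 0 → ‖p - 1‖ ≤ E) (hq : m ≠ 0 → ‖q - 1‖ ≤ E) :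
    ‖l * p + m * q - 1‖ ≤ L * E := by
  have weighted {c r : R} (hr : c ≠ 0 → ‖r - 1‖ ≤ E) : ‖c * (r - 1)‖ ≤ ‖c‖ * E := by
    rcases eq_or_ne c 0 with rfl | hc
    · simp
    · exact (norm_mul_le _ _).trans (by gcongr; exact hr hc)
  calc ‖l * p + m * q - 1‖ = ‖l * (p - 1) + m * (q - 1)‖ := by
        congr 1; linear_combination hlm
    _ ≤ ‖l‖ * E + ‖m‖ * E := (norm_add_le _ _).trans (add_le_add (weighted hp) (weighted hq))
    _ = (‖l‖ + ‖m‖) * E := by ring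
    _ ≤ L * E := by gcongr

theorem norm_div_add_norm_div_le_of_isGreatest {z : ℕ → ℂ} {N : ℕ} {L : ℝ}
    (hz : ∀ i ≤ N, ∀ j ≤ N, i ≠ j → z i ≠ z j)
    (hL : IsGreatest {r : ℝ | ∃ i j k : ℕ, i < j ∧ j < k ∧ k ≤ N ∧
      r = (‖z i - z j‖ + ‖z j - z k‖) / ‖z i - z k‖} L)
    {a j b : ℕ} (haj : a ≤ j) (hjb : j ≤ b) (hab : a < b) (hbN : b ≤ N) :
    ‖(z j - z b) / (z a - z b)‖ + ‖(z a - z j) / (z a - z b)‖ ≤ L := by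
  have hL₁ : 1 ≤ L := by
    obtain ⟨i₀, j₀, k₀, hij₀, hjk₀, hk₀, rfl⟩ := hL.1
    rw [one_le_div (norm_pos_iff.2 (sub_ne_zero.2 (hz _ (by omega) _ hk₀ (by omega))))]
    exact norm_sub_le_norm_sub_add_norm_sub _ _ _
  have hD : ‖z a - z b‖ ≠ 0 := norm_ne_zero_iff.2 (sub_ne_zero.2 (hz _ (by omega) _ hbN hab.ne))
  rw [norm_div, norm_div, ← add_div, add_comm]
  rcases haj.eq_or_lt with rfl | haj
  · rwa [sub_self, norm_zero, zero_add, div_self hD]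
  rcases hjb.eq_or_lt with rfl | hjb
  · rwa [sub_self, norm_zero, add_zero, div_self hD]
  exact hL.2 ⟨a, j, b, haj, hjb, hbN, rfl⟩

theorem stmt11_general (N : ℕ) (zs f : ℕ → ℂ) (t w : ℂ)
    (hz : ∀ i ≤ N, ∀ j ≤ N, i ≠ j → zs i ≠ zs j)
    (L : ℝ)
    (hL : IsGreatest {r : ℝ | ∃ i j k : ℕ, i < j ∧ j < k ∧ k ≤ N ∧
      r = (‖zs i - zs j‖ + ‖zs j - zs k‖) /
          ‖zs i - zs k‖} L)
    (η θ : ℝ) (hη : 0 ≤ η) (hθ : 0 ≤ θ)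
    (k n : ℕ) (hn : 1 ≤ n) (hkn : k + n ≤ N)
    (α β : ℂ) (hα : ‖α‖ ≤ η) (hβ : ‖β‖ ≤ η)
    (δ₁ δ₂ : ℕ → ℂ)
    (hδ₁ : ∀ j, k ≤ j → j ≤ k + n - 1 → ‖δ₁ j‖ ≤ θ)
    (hδ₂ : ∀ j, k + 1 ≤ j → j ≤ k + n → ‖δ₂ j‖ ≤ θ)
    (c₁ c₂ cnew : ℂ)
    (hc₁ : c₁ = ∑ j ∈ Finset.Icc k (k + n - 1), f j * (1 + δ₁ j) *
      ∏ i ∈ (Finset.Icc k (k + n - 1)).erase j, (w - t * zs i) / (zs j - zs i))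
    (hc₂ : c₂ = ∑ j ∈ Finset.Icc (k + 1) (k + n), f j * (1 + δ₂ j) *
      ∏ i ∈ (Finset.Icc (k + 1) (k + n)).erase j, (w - t * zs i) / (zs j - zs i))
    (hcnew : cnew = ((1 + α) * (w - t * zs (n + k)) * c₁
        - (1 + β) * (w - t * zs k) * c₂) / (zs k - zs (k + n))) :
    ∃ δ : ℕ → ℂ,
      (∀ j, k ≤ j → j ≤ k + n → ‖δ j‖ ≤ L * (η + θ + η * θ)) ∧
      cnew = ∑ j ∈ Finset.Icc k (k + n), f j * (1 + δ j) *
        ∏ i ∈ (Finset.Icc k (k + n)).erase j, (w - t * zs i) / (zs j - zs i) := by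
  have hD : zs k - zs (k + n) ≠ 0 := sub_ne_zero.2 (hz _ (by omega) _ hkn (by omega))
  refine ⟨fun j => (zs j - zs (k + n)) / (zs k - zs (k + n)) * ((1 + α) * (1 + δ₁ j)) +
      (zs k - zs j) / (zs k - zs (k + n)) * ((1 + β) * (1 + δ₂ j)) - 1,
    fun j hkj hjn => ?_, ?_⟩
  · refine norm_mul_add_mul_sub_one_le (by field_simp; ring)
      (norm_div_add_norm_div_le_of_isGreatest hz hL hkj hjn (by omega) hkn) (by positivity)
      (fun hl => ?_) (fun hm => ?_)
    · have hj : j ≠ k + n := by rintro rfl; simp at hl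
      exact norm_one_add_mul_one_add_sub_one_le hα (hδ₁ j hkj (by omega))
    · have hj : j ≠ k := by rintro rfl; simp at hm
      exact norm_one_add_mul_one_add_sub_one_le hβ (hδ₂ j (by omega) hjn)
  · have hinj : Set.InjOn zs (Set.Icc k (k + n)) := fun i hi j hj hij => by
      by_contra hne
      exact hz i (by grind) j (by grind) hne hij
    rw [hcnew, hc₁, hc₂, add_comm n k]
    refine (aitken_step t w (by omega) hinj _ _ _ _).trans (sum_congr rfl fun j _ => ?_)
    rw [scaledLagrangeBasis]
    ring

/-- One-step backward-error propagation for the perturbed Aitken recurrence: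
if the level-(n−1) values admit backward-error representations with errors bounded
by `θ`, and the recurrence step carries multiplicative perturbations `α, β` with
`|α|,|β| ≤ η`, then the level-n result admits a backward-error representation with
errors bounded by `L·(η + θ + η·θ)`, where
`L = max_{0≤i<j<k≤N} (|z_i−z_j|+|z_j−z_k|)/|z_i−z_k|`. -/
theorem stmt11 (N : ℕ) (hN : 2 ≤ N) (zs f : ℕ → ℂ) (t w : ℂ)
    (hz : ∀ i ≤ N, ∀ j ≤ N, i ≠ j → zs i ≠ zs j)
    (L : ℝ)
    (hL : IsGreatest {r : ℝ | ∃ i j k : ℕ, i < j ∧ j < k ∧ k ≤ N ∧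
      r = (‖zs i - zs j‖ + ‖zs j - zs k‖) /
          ‖zs i - zs k‖} L)
    (η θ : ℝ) (hη : 0 ≤ η) (hθ : 0 ≤ θ)
    (k n : ℕ) (hn : 1 ≤ n) (hkn : k + n ≤ N)
    (α β : ℂ) (hα : ‖α‖ ≤ η) (hβ : ‖β‖ ≤ η)
    (δ₁ δ₂ : ℕ → ℂ)
    (hδ₁ : ∀ j, k ≤ j → j ≤ k + n - 1 → ‖δ₁ j‖ ≤ θ)
    (hδ₂ : ∀ j, k + 1 ≤ j → j ≤ k + n → ‖δ₂ j‖ ≤ θ)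
    (c₁ c₂ cnew : ℂ)
    (hc₁ : c₁ = ∑ j ∈ Finset.Icc k (k + n - 1), f j * (1 + δ₁ j) *
      ∏ i ∈ (Finset.Icc k (k + n - 1)).erase j, (w - t * zs i) / (zs j - zs i))
    (hc₂ : c₂ = ∑ j ∈ Finset.Icc (k + 1) (k + n), f j * (1 + δ₂ j) *
      ∏ i ∈ (Finset.Icc (k + 1) (k + n)).erase j, (w - t * zs i) / (zs j - zs i))
    (hcnew : cnew = ((1 + α) * (w - t * zs (n + k)) * c₁
        - (1 + β) * (w - t * zs k) * c₂) / (zs k - zs (k + n))) :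
    ∃ δ : ℕ → ℂ,
      (∀ j, k ≤ j → j ≤ k + n → ‖δ j‖ ≤ L * (η + θ + η * θ)) ∧
      cnew = ∑ j ∈ Finset.Icc k (k + n), f j * (1 + δ j) *
        ∏ i ∈ (Finset.Icc k (k + n)).erase j, (w - t * zs i) / (zs j - zs i) :=
  stmt11_general N zs f t w hz L hL η θ hη hθ k n hn hkn α β hα hβ δ₁ δ₂ hδ₁ hδ₂ c₁ c₂ cnew hc₁ hc₂
    hcnew
end
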